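/- arXiv:2510.20009 — 2 statements merged into one kernel-verified Lean document; each statement's English description precedes it below -/
import Mathlib

section
/- If Y_1,...,Y_N are mutually conditionally independent given X, then the set function g(A) := I(X; Y_A) is submodular: for all A ⊆ B ⊆ {1,...,N} and j ∉ B, I(X; Y_j | Y_A) ≥ I(X; Y_j | Y_B). -/
/-!
For `j ∉ B`, conditional independence of `Y_j` and `Y_B` given `X` means `I(Y_j ; Y_B | X) = 0`,
which turns `I(X ; Y_j | Y_B)` into `H(Y_j | Y_B) - H(Y_j | X)`. As `Y_A` is a function of
`Y_B`, `H(Y_j | Y_B) ≤ H(Y_j | Y_A)`: this is the nonnegativity of `I(Y_j ; Y_B | Y_A)`, i.e.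
Gibbs' inequality against the law with the same pair marginals under which `Y_j` and `Y_B` are
conditionally independent given `Y_A`.
-/

open Finset

/-- A probability distribution on a finite sample space, given by weights. -/
structure DiscProb (Ω : Type) [Fintype Ω] where
  w : Ω → ℝ
  nonneg : ∀ ω, 0 ≤ w ω
  sum_one : ∑ ω, w ω = 1

namespace DiscProb

variable {Ω : Type} [Fintype Ω]

/-- Probability that the discrete random variable `X` takes the value `a`. -/
noncomputable def prob (μ : DiscProb Ω) {α : Type} [DecidableEq α]
    (X : Ω → α) (a : α) : ℝ :=
  ∑ ω ∈ Finset.univ.filter (fun ω => X ω = a), μ.w ω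

/-- Shannon entropy of a discrete random variable. -/
noncomputable def entropy (μ : DiscProb Ω) {α : Type} [Fintype α] [DecidableEq α]
    (X : Ω → α) : ℝ :=
  -∑ a : α, μ.prob X a * Real.log (μ.prob X a)

/-- Conditional Shannon entropy `H(X | Y) = H(X, Y) - H(Y)`. -/
noncomputable def condEntropy (μ : DiscProb Ω) {α β : Type}
    [Fintype α] [DecidableEq α] [Fintype β] [DecidableEq β]
    (X : Ω → α) (Y : Ω → β) : ℝ :=
  μ.entropy (fun ω => (X ω, Y ω)) - μ.entropy Y

/-- Mutual information `I(X ; Y) = H(X) + H(Y) - H(X, Y)`. -/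
noncomputable def mutualInfo (μ : DiscProb Ω) {α β : Type}
    [Fintype α] [DecidableEq α] [Fintype β] [DecidableEq β]
    (X : Ω → α) (Y : Ω → β) : ℝ :=
  μ.entropy X + μ.entropy Y - μ.entropy (fun ω => (X ω, Y ω))

/-- Conditional mutual information
`I(X ; Y | Z) = H(X,Z) + H(Y,Z) - H(X,Y,Z) - H(Z)`. -/
noncomputable def condMutualInfo (μ : DiscProb Ω) {α β γ : Type}
    [Fintype α] [DecidableEq α] [Fintype β] [DecidableEq β]
    [Fintype γ] [DecidableEq γ]
    (X : Ω → α) (Y : Ω → β) (Z : Ω → γ) : ℝ :=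
  μ.entropy (fun ω => (X ω, Z ω)) + μ.entropy (fun ω => (Y ω, Z ω))
    - μ.entropy (fun ω => (X ω, Y ω, Z ω)) - μ.entropy Z

end DiscProb

/-- The joint random variable `Y_A = (Y_i)_{i ∈ A}` of a family of random variables. -/
def jointObs {Ω ι : Type} {𝒪 : ι → Type} (Y : ∀ i, Ω → 𝒪 i) (A : Finset ι) :
    Ω → ((i : A) → 𝒪 i.1) := fun ω i => Y i.1 ω

/-- The random variables `Y_i, i ∈ ι` are mutually conditionally independent given `X`:
for every finite subset `A`, `P(Y_A = y | X = x) = ∏_{i ∈ A} P(Y_i = y_i | X = x)`,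
written in a division-free form. -/
def iCondIndepGiven {Ω : Type} [Fintype Ω] {α ι : Type} [DecidableEq α]
    {𝒪 : ι → Type} [∀ i, DecidableEq (𝒪 i)] (μ : DiscProb Ω)
    (X : Ω → α) (Y : ∀ i, Ω → 𝒪 i) : Prop :=
  ∀ (A : Finset ι) (y : (i : A) → 𝒪 i.1) (x : α),
    μ.prob (fun ω => (jointObs Y A ω, X ω)) (y, x) * (μ.prob X x) ^ A.card
      = μ.prob X x * ∏ i : A, μ.prob (fun ω => (Y i.1 ω, X ω)) (y i, x)

/-- `Y₁` and `Y₂` are conditionally independent given `X`: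
`P(Y₁ = y₁, Y₂ = y₂ | X = x) = P(Y₁ = y₁ | X = x) ⬝ P(Y₂ = y₂ | X = x)`,
written in a division-free form. -/
def pairCondIndepGiven {Ω : Type} [Fintype Ω] {α β γ : Type}
    [DecidableEq α] [DecidableEq β] [DecidableEq γ] (μ : DiscProb Ω)
    (Y₁ : Ω → β) (Y₂ : Ω → γ) (X : Ω → α) : Prop :=
  ∀ (y₁ : β) (y₂ : γ) (x : α),
    μ.prob (fun ω => (Y₁ ω, Y₂ ω, X ω)) (y₁, y₂, x) * μ.prob X x
      = μ.prob (fun ω => (Y₁ ω, X ω)) (y₁, x) * μ.prob (fun ω => (Y₂ ω, X ω)) (y₂, x)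

theorem Real.mul_log_sub_mul_log_le {p q : ℝ} (hp : 0 ≤ p) (hq : 0 ≤ q) (hpq : p ≠ 0 → q ≠ 0) :
    p * Real.log q - p * Real.log p ≤ q - p := by
  rcases hp.eq_or_lt with rfl | hp
  · simpa using hq
  have hq : 0 < q := hq.lt_of_ne' (hpq hp.ne')
  have h := Real.log_le_sub_one_of_pos (div_pos hq hp)
  rw [Real.log_div hq.ne' hp.ne'] at h
  have := mul_le_mul_of_nonneg_left h hp.le
  rw [mul_sub, mul_sub, mul_div_cancel₀ _ hp.ne', mul_one] at this
  linarith

/-- **Gibbs' inequality**. -/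
theorem Real.sum_mul_log_le_sum_mul_log {ι : Type*} (s : Finset ι) {p q : ι → ℝ}
    (hp : ∀ i ∈ s, 0 ≤ p i) (hq : ∀ i ∈ s, 0 ≤ q i) (hpq : ∀ i ∈ s, p i ≠ 0 → q i ≠ 0)
    (hsum : ∑ i ∈ s, q i ≤ ∑ i ∈ s, p i) :
    ∑ i ∈ s, p i * Real.log (q i) ≤ ∑ i ∈ s, p i * Real.log (p i) := by
  have := Finset.sum_le_sum fun i hi =>
    Real.mul_log_sub_mul_log_le (hp i hi) (hq i hi) (hpq i hi)
  rw [Finset.sum_sub_distrib, Finset.sum_sub_distrib] at this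
  linarith

namespace DiscProb

variable {Ω : Type} [Fintype Ω] (μ : DiscProb Ω)

section Prob

variable {V S : Type} [DecidableEq V] [DecidableEq S]

lemma prob_nonneg (T : Ω → V) (v : V) : 0 ≤ μ.prob T v :=
  Finset.sum_nonneg fun ω _ => μ.nonneg ω

lemma sum_prob [Fintype V] (T : Ω → V) : ∑ v, μ.prob T v = 1 := by
  unfold prob
  rw [Finset.sum_fiberwise, μ.sum_one]

lemma prob_comp [Fintype V] (T : Ω → V) (f : V → S) (s : S) :
    μ.prob (fun ω => f (T ω)) s = ∑ v with f v = s, μ.prob T v := by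
  unfold prob
  rw [Finset.sum_fiberwise_eq_sum_filter univ _ T μ.w]
  exact Finset.sum_congr (by ext; simp) fun _ _ => rfl

lemma prob_le_prob_comp (T : Ω → V) (f : V → S) (v : V) :
    μ.prob T v ≤ μ.prob (fun ω => f (T ω)) (f v) := by
  refine Finset.sum_le_sum_of_subset_of_nonneg (fun ω hω => ?_) fun ω _ _ => μ.nonneg ω
  simp only [Finset.mem_filter, Finset.mem_univ, true_and] at hω ⊢
  rw [hω]

lemma prob_comp_ne_zero {T : Ω → V} {v : V} (h : μ.prob T v ≠ 0) (f : V → S) :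
    μ.prob (fun ω => f (T ω)) (f v) ≠ 0 :=
  ((μ.prob_nonneg T v).lt_of_ne' h |>.trans_le (μ.prob_le_prob_comp T f v)).ne'

lemma prob_comp_injective (T : Ω → V) {f : V → S} (hf : Function.Injective f) (v : V) :
    μ.prob (fun ω => f (T ω)) (f v) = μ.prob T v := by
  simp only [prob, hf.eq_iff]

lemma sum_prob_prod_left {A C : Type} [Fintype A] [DecidableEq A] [DecidableEq C]
    (P : Ω → A) (Q : Ω → C) (c : C) :
    ∑ a, μ.prob (fun ω => (P ω, Q ω)) (a, c) = μ.prob Q c := by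
  simp only [prob, Finset.sum_filter, Prod.mk.injEq]
  rw [Finset.sum_comm]
  refine Finset.sum_congr rfl fun ω _ => ?_
  by_cases h : Q ω = c <;> simp [h]

end Prob

section Entropy

variable {V S : Type} [Fintype V] [DecidableEq V] [Fintype S] [DecidableEq S]

lemma entropy_comp (T : Ω → V) (f : V → S) :
    μ.entropy (fun ω => f (T ω))
      = -∑ v, μ.prob T v * Real.log (μ.prob (fun ω => f (T ω)) (f v)) := by
  unfold entropy
  rw [← Finset.sum_fiberwise univ f]
  refine congrArg _ (Finset.sum_congr rfl fun s _ => ?_)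
  rw [Finset.sum_congr rfl fun v hv => by rw [(Finset.mem_filter.mp hv).2], ← Finset.sum_mul,
    ← prob_comp]

lemma entropy_comp_injective (T : Ω → V) {f : V → S} (hf : Function.Injective f) :
    μ.entropy (fun ω => f (T ω)) = μ.entropy T := by
  rw [entropy_comp μ T f]
  simp only [prob_comp_injective μ T hf, entropy]

lemma entropy_prod_comm (U : Ω → V) (W : Ω → S) :
    μ.entropy (fun ω => (U ω, W ω)) = μ.entropy (fun ω => (W ω, U ω)) :=
  μ.entropy_comp_injective (fun ω => (W ω, U ω)) (f := Prod.swap) Prod.swap_injective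

lemma entropy_prod_assoc {R : Type} [Fintype R] [DecidableEq R] (U : Ω → V) (W : Ω → S)
    (Z : Ω → R) :
    μ.entropy (fun ω => ((U ω, W ω), Z ω)) = μ.entropy (fun ω => (U ω, W ω, Z ω)) :=
  (μ.entropy_comp_injective (fun ω => ((U ω, W ω), Z ω)) (f := Equiv.prodAssoc V S R)
    (Equiv.injective _)).symm

end Entropy

section CondMutualInfo

variable {A B C : Type} [DecidableEq A] [DecidableEq B] [DecidableEq C]
  (U : Ω → A) (V : Ω → B) (W : Ω → C)

/-- The weight `P(a, c) P(b, c) / P(c)` of the law under which `U` and `V` are conditionally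
independent given `W` with the same pair marginals (it is `0` where `P(c) = 0`). -/
noncomputable def condProdMarginal (v : A × B × C) : ℝ :=
  μ.prob (fun ω => (U ω, W ω)) (v.1, v.2.2) * μ.prob (fun ω => (V ω, W ω)) v.2
    / μ.prob W v.2.2

lemma prob_marginals_ne_zero {v : A × B × C} (h : μ.prob (fun ω => (U ω, V ω, W ω)) v ≠ 0) :
    μ.prob (fun ω => (U ω, W ω)) (v.1, v.2.2) ≠ 0 ∧ μ.prob (fun ω => (V ω, W ω)) v.2 ≠ 0 ∧
      μ.prob W v.2.2 ≠ 0 :=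
  ⟨μ.prob_comp_ne_zero h (fun v => (v.1, v.2.2)), μ.prob_comp_ne_zero h Prod.snd,
    μ.prob_comp_ne_zero h (fun v => v.2.2)⟩

lemma condProdMarginal_ne_zero {v : A × B × C}
    (h : μ.prob (fun ω => (U ω, V ω, W ω)) v ≠ 0) : μ.condProdMarginal U V W v ≠ 0 := by
  obtain ⟨h13, h23, h3⟩ := μ.prob_marginals_ne_zero U V W h
  exact div_ne_zero (mul_ne_zero h13 h23) h3

lemma condProdMarginal_eq_prob (hUV : pairCondIndepGiven μ U V W) {v : A × B × C}
    (h : μ.prob (fun ω => (U ω, V ω, W ω)) v ≠ 0) :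
    μ.condProdMarginal U V W v = μ.prob (fun ω => (U ω, V ω, W ω)) v := by
  obtain ⟨-, -, h3⟩ := μ.prob_marginals_ne_zero U V W h
  obtain ⟨a, b, c⟩ := v
  rw [condProdMarginal, div_eq_iff h3, hUV a b c]

variable [Fintype A] [Fintype B] [Fintype C]

lemma sum_condProdMarginal_le_one : ∑ v, μ.condProdMarginal U V W v ≤ 1 := by
  calc ∑ v, μ.condProdMarginal U V W v
      = ∑ bc : B × C, (∑ a, μ.prob (fun ω => (U ω, W ω)) (a, bc.2))
          * (μ.prob (fun ω => (V ω, W ω)) bc / μ.prob W bc.2) := by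
        rw [Fintype.sum_prod_type, Finset.sum_comm]
        simp only [condProdMarginal, mul_div_assoc, Finset.sum_mul]
    _ ≤ ∑ bc : B × C, μ.prob (fun ω => (V ω, W ω)) bc := by
        refine Finset.sum_le_sum fun bc _ => ?_
        rw [sum_prob_prod_left]
        rcases eq_or_ne (μ.prob W bc.2) 0 with h | h
        · simpa [h] using μ.prob_nonneg _ bc
        · rw [mul_div_cancel₀ _ h]
    _ = 1 := μ.sum_prob _

lemma condMutualInfo_eq_sum_sub_sum : μ.condMutualInfo U V W
    = ∑ v, μ.prob (fun ω => (U ω, V ω, W ω)) v * Real.log (μ.prob (fun ω => (U ω, V ω, W ω)) v)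
      - ∑ v, μ.prob (fun ω => (U ω, V ω, W ω)) v * Real.log (μ.condProdMarginal U V W v) := by
  set T := fun ω => (U ω, V ω, W ω)
  have hlog : ∀ v, μ.prob T v * Real.log (μ.condProdMarginal U V W v)
      = μ.prob T v * Real.log (μ.prob (fun ω => (U ω, W ω)) (v.1, v.2.2))
        + μ.prob T v * Real.log (μ.prob (fun ω => (V ω, W ω)) v.2)
        - μ.prob T v * Real.log (μ.prob W v.2.2) := by
    intro v
    rcases eq_or_ne (μ.prob T v) 0 with h | h
    · simp [h]
    obtain ⟨h13, h23, h3⟩ := μ.prob_marginals_ne_zero U V W h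
    rw [condProdMarginal, Real.log_div (mul_ne_zero h13 h23) h3, Real.log_mul h13 h23]
    ring
  have h13 := μ.entropy_comp T (fun v => (v.1, v.2.2))
  have h23 := μ.entropy_comp T Prod.snd
  have h3 := μ.entropy_comp T (fun v => v.2.2)
  unfold condMutualInfo
  rw [h13, h23, h3]
  simp only [hlog, Finset.sum_sub_distrib, Finset.sum_add_distrib]
  unfold entropy
  ring

theorem condMutualInfo_nonneg : 0 ≤ μ.condMutualInfo U V W := by
  rw [condMutualInfo_eq_sum_sub_sum, sub_nonneg]
  refine Real.sum_mul_log_le_sum_mul_log univ (fun v _ => μ.prob_nonneg _ v)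
    (fun v _ => div_nonneg (mul_nonneg (μ.prob_nonneg _ _) (μ.prob_nonneg _ _)) (μ.prob_nonneg _ _))
    (fun v _ => μ.condProdMarginal_ne_zero U V W) ?_
  rw [μ.sum_prob]
  exact μ.sum_condProdMarginal_le_one U V W

theorem condMutualInfo_eq_zero_of_pairCondIndepGiven (hUV : pairCondIndepGiven μ U V W) :
    μ.condMutualInfo U V W = 0 := by
  rw [condMutualInfo_eq_sum_sub_sum, sub_eq_zero]
  refine Finset.sum_congr rfl fun v _ => ?_
  rcases eq_or_ne (μ.prob (fun ω => (U ω, V ω, W ω)) v) 0 with h | h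
  · simp [h]
  · rw [μ.condProdMarginal_eq_prob U V W hUV h]

end CondMutualInfo

section CondEntropy

variable {A B C D : Type} [Fintype A] [DecidableEq A] [Fintype B] [DecidableEq B]
  [Fintype C] [DecidableEq C] [Fintype D] [DecidableEq D]

theorem condEntropy_le_condEntropy_comp (V : Ω → B) (Z : Ω → C) (f : C → D) :
    μ.condEntropy V Z ≤ μ.condEntropy V (fun ω => f (Z ω)) := by
  have h := μ.condMutualInfo_nonneg V Z (fun ω => f (Z ω))
  have hZ : μ.entropy (fun ω => (Z ω, f (Z ω))) = μ.entropy Z :=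
    μ.entropy_comp_injective Z (f := fun c => (c, f c)) fun _ _ h => congrArg Prod.fst h
  have hVZ : μ.entropy (fun ω => (V ω, Z ω, f (Z ω))) = μ.entropy (fun ω => (V ω, Z ω)) :=
    μ.entropy_comp_injective (fun ω => (V ω, Z ω)) (f := fun p => (p.1, p.2, f p.2))
      fun _ _ h => Prod.ext (Prod.ext_iff.mp h).1 (Prod.ext_iff.mp (Prod.ext_iff.mp h).2).1
  unfold condMutualInfo at h
  unfold condEntropy
  linarith

theorem condMutualInfo_eq_condEntropy_sub_condEntropy (X : Ω → A) (V : Ω → B) (Z : Ω → C)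
    (hVZ : pairCondIndepGiven μ V Z X) :
    μ.condMutualInfo X V Z = μ.condEntropy V Z - μ.condEntropy V X := by
  have h := μ.condMutualInfo_eq_zero_of_pairCondIndepGiven V Z X hVZ
  have hXZ := μ.entropy_prod_comm X Z
  have hXVZ : μ.entropy (fun ω => (X ω, V ω, Z ω)) = μ.entropy (fun ω => (V ω, Z ω, X ω)) :=
    (μ.entropy_prod_comm X (fun ω => (V ω, Z ω))).trans (μ.entropy_prod_assoc V Z X)
  unfold condMutualInfo at h ⊢
  unfold condEntropy
  linarith

end CondEntropy

end DiscProb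

theorem Finset.prod_coe_sort_insert {ι M : Type*} [DecidableEq ι] [CommMonoid M] {B : Finset ι}
    {j : ι} (hj : j ∉ B) (f : ↥(insert j B) → M) :
    ∏ i, f i = f ⟨j, mem_insert_self j B⟩ * ∏ i : B, f ⟨i.1, mem_insert_of_mem i.2⟩ := by
  rw [← (Finset.subtypeInsertEquivOption hj).symm.prod_comp, Fintype.prod_option]
  rfl

section InsertGlue

variable {ι : Type} [DecidableEq ι] {𝒪 : ι → Type} {B : Finset ι} {j : ι}

def insertGlue (yj : 𝒪 j) (yB : (i : B) → 𝒪 i.1) : (i : (insert j B : Finset ι)) → 𝒪 i.1 :=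
  fun i => if h : i.1 = j then cast (congrArg 𝒪 h.symm) yj
    else yB ⟨i.1, (Finset.mem_insert.mp i.2).resolve_left h⟩

lemma insertGlue_self (yj : 𝒪 j) (yB : (i : B) → 𝒪 i.1) :
    insertGlue yj yB ⟨j, mem_insert_self j B⟩ = yj := by
  simp [insertGlue]

lemma insertGlue_of_mem (hj : j ∉ B) (yj : 𝒪 j) (yB : (i : B) → 𝒪 i.1) (i : B) :
    insertGlue yj yB ⟨i.1, mem_insert_of_mem i.2⟩ = yB i := by
  have : i.1 ≠ j := fun h => hj (h ▸ i.2)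
  simp [insertGlue, this]

lemma insertGlue_injective (hj : j ∉ B) :
    Function.Injective fun y : 𝒪 j × ((i : B) → 𝒪 i.1) => insertGlue y.1 y.2 := by
  rintro ⟨a, b⟩ ⟨a', b'⟩ h
  refine Prod.ext ?_ (funext fun i => ?_)
  · simpa [insertGlue_self] using congrFun h ⟨j, mem_insert_self j B⟩
  · simpa [insertGlue_of_mem hj] using congrFun h ⟨i.1, mem_insert_of_mem i.2⟩

lemma jointObs_insert {Ω : Type} (Y : ∀ i, Ω → 𝒪 i) (ω : Ω) :
    jointObs Y (insert j B) ω = insertGlue (Y j ω) (jointObs Y B ω) := by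
  funext ⟨i, hi⟩
  by_cases h : i = j
  · subst h
    simp [insertGlue, jointObs]
  · simp [insertGlue, jointObs, h]

end InsertGlue

theorem iCondIndepGiven.pairCondIndepGiven_jointObs {Ω : Type} [Fintype Ω] {α ι : Type}
    [DecidableEq α] [DecidableEq ι] {𝒪 : ι → Type} [∀ i, DecidableEq (𝒪 i)] {μ : DiscProb Ω}
    {X : Ω → α} {Y : ∀ i, Ω → 𝒪 i} (hCI : iCondIndepGiven μ X Y) {B : Finset ι} {j : ι}
    (hj : j ∉ B) : pairCondIndepGiven μ (Y j) (jointObs Y B) X := by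
  intro yj yB x
  have hevent : μ.prob (fun ω => (jointObs Y (insert j B) ω, X ω)) (insertGlue yj yB, x)
      = μ.prob (fun ω => (Y j ω, jointObs Y B ω, X ω)) (yj, yB, x) := by
    simp only [jointObs_insert]
    exact μ.prob_comp_injective (fun ω => (Y j ω, jointObs Y B ω, X ω))
      (f := fun t => (insertGlue t.1 t.2.1, t.2.2))
      (((insertGlue_injective hj).prodMap Function.injective_id).comp
        (Equiv.prodAssoc _ _ _).symm.injective) (yj, yB, x)
  have hjB := hCI (insert j B) (insertGlue yj yB) x
  rw [hevent, Finset.card_insert_of_notMem hj, Finset.prod_coe_sort_insert hj,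
    insertGlue_self] at hjB
  simp only [insertGlue_of_mem hj] at hjB
  rcases eq_or_ne (μ.prob X x) 0 with hx | hx
  · have hjx : μ.prob (fun ω => (Y j ω, X ω)) (yj, x) = 0 :=
      le_antisymm (hx ▸ μ.prob_le_prob_comp _ Prod.snd (yj, x)) (μ.prob_nonneg _ _)
    rw [hx, hjx, mul_zero, zero_mul]
  · -- the factorisation over `insert j B` is `P(Y_j = y_j, X = x) / P(X = x)` times that over `B`
    apply mul_right_cancel₀ (pow_ne_zero B.card hx)
    linear_combination hjB - μ.prob (fun ω => (Y j ω, X ω)) (yj, x) * hCI B yB x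

variable {Ω α : Type} [Fintype Ω] [Fintype α] [DecidableEq α]
  {N : ℕ} {𝒪 : Fin N → Type} [∀ i, Fintype (𝒪 i)] [∀ i, DecidableEq (𝒪 i)]

/-- under mutual conditional independence of the `Y_i` given `X`,
the set function `A ↦ I(X ; Y_A)` has diminishing returns:
for `A ⊆ B` and `j ∉ B`, `I(X ; Y_j | Y_A) ≥ I(X ; Y_j | Y_B)`. -/
theorem mutualInfo_submodular_diminishing_returns
    (μ : DiscProb Ω) (X : Ω → α) (Y : ∀ i, Ω → 𝒪 i)
    (hCI : iCondIndepGiven μ X Y)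
    (A B : Finset (Fin N)) (j : Fin N) (hAB : A ⊆ B) (hj : j ∉ B) :
    μ.condMutualInfo X (Y j) (jointObs Y B) ≤ μ.condMutualInfo X (Y j) (jointObs Y A) := by
  rw [μ.condMutualInfo_eq_condEntropy_sub_condEntropy X (Y j) _
      (hCI.pairCondIndepGiven_jointObs hj),
    μ.condMutualInfo_eq_condEntropy_sub_condEntropy X (Y j) _
      (hCI.pairCondIndepGiven_jointObs fun hjA => hj (hAB hjA))]
  exact sub_le_sub_right (μ.condEntropy_le_condEntropy_comp (Y j) (jointObs Y B)
    fun yB (i : A) => yB ⟨i.1, hAB i.2⟩) _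
end

section
/- In a factored multi-agent POMDP with independent dynamics (environment state S_{e,t} evolving autonomously as a Markov chain, agent states S_{i,t} evolving via P_i(·|S_{i,t−1}, A_{i,t}) independently across agents, independent initial distributions, and each agent's observation depending only on (S_{e,t}, S_{i,t})), the local observation-action sequences Y_i and Y_j of any two distinct agents i ≠ j following local policies are conditionally independent given the environment state sequence X_e = S_{e,0:T}. -/
/-! Given the environment trajectory, the weight of an outcome is a product over the agents of
factors that each involve only that agent's own state, observation and action trajectories (the
policies are local and the environment evolves autonomously). Splitting off agent `j`, the law
becomes `F(x, rest) * G(x, z_j)`, so `P(Y_i, Y_j, X_e)` factors as `a(Y_i, X_e) * b(Y_j, X_e)`;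
summing out `Y_i`, `Y_j` or both gives the three marginals, and conditional independence is the
resulting identity `a b · (∑ a)(∑ b) = a (∑ b) · (∑ a) b`. -/

open Finset

namespace DiscProb

variable {Ω α β γ : Type} [Fintype Ω] [DecidableEq α] [DecidableEq β] [DecidableEq γ]
  (μ : DiscProb Ω)

theorem prob_eq_sum_prob_prod [Fintype β] (X : Ω → α) (Y : Ω → β) (x : α) :
    μ.prob X x = ∑ y, μ.prob (fun ω => (Y ω, X ω)) (y, x) := by
  simp only [prob, sum_filter, Prod.mk.injEq, ite_and]
  rw [sum_comm]
  simp

theorem prob_prod_eq_sum_prob_prod [Fintype γ] (X : Ω → α) (Y₁ : Ω → β) (Y₂ : Ω → γ)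
    (y₁ : β) (x : α) :
    μ.prob (fun ω => (Y₁ ω, X ω)) (y₁, x)
      = ∑ y₂, μ.prob (fun ω => (Y₁ ω, Y₂ ω, X ω)) (y₁, y₂, x) := by
  simp only [prob, sum_filter, Prod.mk.injEq, ite_and]
  rw [sum_comm]
  simp

end DiscProb

theorem pairCondIndepGiven_of_prob_eq_mul {Ω α β γ : Type} [Fintype Ω] [DecidableEq α]
    [Fintype β] [DecidableEq β] [Fintype γ] [DecidableEq γ] {μ : DiscProb Ω}
    {Y₁ : Ω → β} {Y₂ : Ω → γ} {X : Ω → α} (a : β → α → ℝ) (b : γ → α → ℝ)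
    (h : ∀ y₁ y₂ x, μ.prob (fun ω => (Y₁ ω, Y₂ ω, X ω)) (y₁, y₂, x) = a y₁ x * b y₂ x) :
    pairCondIndepGiven μ Y₁ Y₂ X := by
  intro y₁ y₂ x
  have h₁ : μ.prob (fun ω => (Y₁ ω, X ω)) (y₁, x) = a y₁ x * ∑ y₂, b y₂ x := by
    rw [μ.prob_prod_eq_sum_prob_prod X Y₁ Y₂]
    simp only [h, mul_sum]
  have h₂ : μ.prob (fun ω => (Y₂ ω, X ω)) (y₂, x) = (∑ y₁, a y₁ x) * b y₂ x := by
    rw [μ.prob_eq_sum_prob_prod _ Y₁]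
    simp only [h, sum_mul]
  have h₀ : μ.prob X x = (∑ y₁, a y₁ x) * ∑ y₂, b y₂ x := by
    rw [μ.prob_eq_sum_prob_prod X Y₁]
    simp only [μ.prob_prod_eq_sum_prob_prod X Y₁ Y₂, h, sum_mul_sum]
  rw [h, h₀, h₁, h₂]
  ring

theorem pairCondIndepGiven_of_w_eq_mul {Ω X U V β γ : Type} [Fintype Ω]
    [Fintype X] [DecidableEq X] [Fintype U] [Fintype V]
    [Fintype β] [DecidableEq β] [Fintype γ] [DecidableEq γ]
    (μ : DiscProb Ω) (e : Ω ≃ X × U × V) (F : X → U → ℝ) (G : X → V → ℝ)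
    (hw : ∀ ω, μ.w ω = F (e ω).1 (e ω).2.1 * G (e ω).1 (e ω).2.2)
    (g₁ : U → β) (g₂ : V → γ) :
    pairCondIndepGiven μ (fun ω => g₁ (e ω).2.1) (fun ω => g₂ (e ω).2.2) (fun ω => (e ω).1) := by
  refine pairCondIndepGiven_of_prob_eq_mul
    (fun y₁ x => ∑ u with g₁ u = y₁, F x u) (fun y₂ x => ∑ v with g₂ v = y₂, G x v) ?_
  intro y₁ y₂ x
  simp only [DiscProb.prob, sum_filter, hw]
  rw [← e.symm.sum_comp]
  simp only [Equiv.apply_symm_apply, Fintype.sum_prod_type, sum_mul_sum, Prod.mk.injEq,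
    ← and_rotate (a := _ = x), ite_and, sum_ite_irrel, sum_const_zero,
    sum_ite_eq', mem_univ, if_true]
  refine sum_congr rfl fun u _ => ?_
  split_ifs <;> simp

theorem pairCondIndepGiven_of_w_eq_mul_prod {Ω X ι β γ : Type} {Z : ι → Type} [Fintype Ω]
    [Fintype X] [DecidableEq X] [Fintype ι] [DecidableEq ι] [∀ k, Fintype (Z k)]
    [Fintype β] [DecidableEq β] [Fintype γ] [DecidableEq γ]
    (μ : DiscProb Ω) (e : Ω ≃ X × ∀ k, Z k) (W : X → ℝ) (f : X → ∀ k, Z k → ℝ)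
    (hw : ∀ ω, μ.w ω = W (e ω).1 * ∏ k, f (e ω).1 k ((e ω).2 k))
    {i j : ι} (hij : i ≠ j) (g₁ : Z i → β) (g₂ : Z j → γ) :
    pairCondIndepGiven μ (fun ω => g₁ ((e ω).2 i)) (fun ω => g₂ ((e ω).2 j))
      (fun ω => (e ω).1) := by
  let split : (∀ k, Z k) ≃ (∀ k : {k // k ≠ j}, Z k) × Z j :=
    (Equiv.piSplitAt j Z).trans (Equiv.prodComm _ _)
  refine pairCondIndepGiven_of_w_eq_mul μ (e.trans ((Equiv.refl X).prodCongr split))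
    (fun x z => W x * ∏ k : {k // k ≠ j}, f x k (z k)) (fun x c => f x j c)
    (fun ω => ?_) (fun z => g₁ (z ⟨i, hij⟩)) g₂
  change _ = W (e ω).1 * (∏ k : {k // k ≠ j}, f (e ω).1 k ((e ω).2 k))
    * f (e ω).1 j ((e ω).2 j)
  rw [hw, Fintype.prod_eq_mul_prod_subtype_ne _ j]
  ring

theorem factored_pomdp_pairwise_cond_indep_general
    (T N : ℕ) {Se : Type} [Fintype Se] [DecidableEq Se]
    {Si O A : Fin N → Type}
    [∀ i, Fintype (Si i)]
    [∀ i, Fintype (O i)] [∀ i, DecidableEq (O i)]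
    [∀ i, Fintype (A i)] [∀ i, DecidableEq (A i)]
    (μe : Se → ℝ) (Pe : Se → Se → ℝ) (μ0 : ∀ i, Si i → ℝ)
    (Pi : ∀ i, Si i → A i → Si i → ℝ) (E : ∀ i, Se → Si i → O i → ℝ)
    (π : ∀ i, Fin (T + 1) → (Fin (T + 1) → O i) → (Fin (T + 1) → A i) → A i → ℝ)
    (μ : DiscProb ((Fin (T + 1) → Se) × (∀ i, Fin (T + 1) → Si i) ×
          (∀ i, Fin (T + 1) → O i) × (∀ i, Fin (T + 1) → A i)))
    (hw : ∀ ω : (Fin (T + 1) → Se) × (∀ i, Fin (T + 1) → Si i) ×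
          (∀ i, Fin (T + 1) → O i) × (∀ i, Fin (T + 1) → A i),
        μ.w ω = μe (ω.1 0)
          * (∏ t : Fin T, Pe (ω.1 t.castSucc) (ω.1 t.succ))
          * (∏ i, μ0 i (ω.2.1 i 0))
          * (∏ i, ∏ t : Fin T,
              Pi i (ω.2.1 i t.castSucc) (ω.2.2.2 i t.castSucc) (ω.2.1 i t.succ))
          * (∏ i, ∏ t, E i (ω.1 t) (ω.2.1 i t) (ω.2.2.1 i t))
          * (∏ i, ∏ t, π i t (ω.2.2.1 i) (ω.2.2.2 i) (ω.2.2.2 i t)))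
    (i j : Fin N) (hij : i ≠ j) :
    pairCondIndepGiven μ (fun ω => (ω.2.2.1 i, ω.2.2.2 i))
      (fun ω => (ω.2.2.1 j, ω.2.2.2 j)) (fun ω => ω.1) := by
  let agents : (∀ k, Fin (T + 1) → Si k) × (∀ k, Fin (T + 1) → O k) × (∀ k, Fin (T + 1) → A k)
      ≃ ∀ k, (Fin (T + 1) → Si k) × (Fin (T + 1) → O k) × (Fin (T + 1) → A k) :=
    ((Equiv.refl _).prodCongr (Equiv.arrowProdEquivProdArrow _ _ _).symm).trans
      (Equiv.arrowProdEquivProdArrow _ _ _).symm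
  refine pairCondIndepGiven_of_w_eq_mul_prod μ ((Equiv.refl _).prodCongr agents)
    (fun xe => μe (xe 0) * ∏ t : Fin T, Pe (xe t.castSucc) (xe t.succ))
    (fun xe k z => μ0 k (z.1 0)
      * (∏ t : Fin T, Pi k (z.1 t.castSucc) (z.2.2 t.castSucc) (z.1 t.succ))
      * (∏ t, E k (xe t) (z.1 t) (z.2.1 t))
      * (∏ t, π k t z.2.1 z.2.2 (z.2.2 t))) (fun ω => ?_) hij Prod.snd Prod.snd
  rw [hw ω]
  simp only [agents, Equiv.prodCongr_apply, Equiv.trans_apply, Equiv.refl_apply,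
    Equiv.arrowProdEquivProdArrow_symm_apply, Prod.map_fst, Prod.map_snd,
    prod_mul_distrib]
  ring

/-- in a factored multi-agent POMDP (autonomous environment chain,
independent agent dynamics and initial distributions, local observations depending
only on `(s_e, s_i)`, local policies), the local observation-action sequences of any
two distinct agents are conditionally independent given the environment state
sequence `X_e = S_{e,0:T}`. The hypothesis `hw` states the factored law. -/
theorem factored_pomdp_pairwise_cond_indep
    (T N : ℕ) {Se : Type} [Fintype Se] [DecidableEq Se]
    {Si O A : Fin N → Type}
    [∀ i, Fintype (Si i)] [∀ i, DecidableEq (Si i)]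
    [∀ i, Fintype (O i)] [∀ i, DecidableEq (O i)]
    [∀ i, Fintype (A i)] [∀ i, DecidableEq (A i)]
    (μe : Se → ℝ) (hμe : ∀ s, 0 ≤ μe s) (hμesum : ∑ s, μe s = 1)
    (Pe : Se → Se → ℝ) (hPe : ∀ s s', 0 ≤ Pe s s') (hPesum : ∀ s, ∑ s', Pe s s' = 1)
    (μ0 : ∀ i, Si i → ℝ) (hμ0 : ∀ i s, 0 ≤ μ0 i s) (hμ0sum : ∀ i, ∑ s, μ0 i s = 1)
    (Pi : ∀ i, Si i → A i → Si i → ℝ) (hPi : ∀ i s a s', 0 ≤ Pi i s a s')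
    (hPisum : ∀ i s a, ∑ s', Pi i s a s' = 1)
    (E : ∀ i, Se → Si i → O i → ℝ) (hE : ∀ i se s o, 0 ≤ E i se s o)
    (hEsum : ∀ i se s, ∑ o, E i se s o = 1)
    (π : ∀ i, Fin (T + 1) → (Fin (T + 1) → O i) → (Fin (T + 1) → A i) → A i → ℝ)
    (hπ : ∀ i t o a b, 0 ≤ π i t o a b)
    (hπsum : ∀ i t o a, ∑ b, π i t o a b = 1)
    (hlocal : ∀ i t o o' a a', (∀ t' : Fin (T + 1), t' ≤ t → o t' = o' t') →
        (∀ t' : Fin (T + 1), t' < t → a t' = a' t') → π i t o a = π i t o' a')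
    (μ : DiscProb ((Fin (T + 1) → Se) × (∀ i, Fin (T + 1) → Si i) ×
          (∀ i, Fin (T + 1) → O i) × (∀ i, Fin (T + 1) → A i)))
    (hw : ∀ ω : (Fin (T + 1) → Se) × (∀ i, Fin (T + 1) → Si i) ×
          (∀ i, Fin (T + 1) → O i) × (∀ i, Fin (T + 1) → A i),
        μ.w ω = μe (ω.1 0)
          * (∏ t : Fin T, Pe (ω.1 t.castSucc) (ω.1 t.succ))
          * (∏ i, μ0 i (ω.2.1 i 0))
          * (∏ i, ∏ t : Fin T,
              Pi i (ω.2.1 i t.castSucc) (ω.2.2.2 i t.castSucc) (ω.2.1 i t.succ))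
          * (∏ i, ∏ t, E i (ω.1 t) (ω.2.1 i t) (ω.2.2.1 i t))
          * (∏ i, ∏ t, π i t (ω.2.2.1 i) (ω.2.2.2 i) (ω.2.2.2 i t)))
    (i j : Fin N) (hij : i ≠ j) :
    pairCondIndepGiven μ (fun ω => (ω.2.2.1 i, ω.2.2.2 i))
      (fun ω => (ω.2.2.1 j, ω.2.2.2 j)) (fun ω => ω.1) :=
  factored_pomdp_pairwise_cond_indep_general T N μe Pe μ0 Pi E π μ hw i j hij
end
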